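/- Define f_ε(x) = n^{−2} e^{n/q} (constant in x ∈ R) when ε ∈ [1/n − e^{−n}, 1/n + e^{−n}] for some integer n ≥ 4, and f_ε(x) = 0 otherwise. Then for every q' ≤ q there exists s ∈ R with ∫₀¹ ε^{q's} |f_ε(0)|^{q'} dε/ε < ∞, but for every q' > q and every s ∈ R, ∫₀¹ ε^{q's} |f_ε(0)|^{q'} dε/ε = ∞. -/

import Mathlib

/-!
On the spike `J n = [1/n - e^{-n}, 1/n + e^{-n}]` the net equals `c_n = n^{-2} e^{n/q}` and `ε` is
comparable to `1/n`, so the weighted integral over `J n` is, up to factors polynomial in `n`,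
`c_n^{q'} · |J n| ≈ e^{n (q'/q - 1)}`. For `q' ≤ q` and `s = 1/q'` the weight disappears and the
contributions are bounded by `n^{-2}`, hence summable; for `q' > q` they grow exponentially, which
no polynomial weight `ε^{q's - 1}` can compensate.
-/

open MeasureTheory Set Real Filter

noncomputable def spikeInterval (n : ℕ) : Set ℝ :=
  Icc ((n : ℝ)⁻¹ - exp (-(n : ℝ))) ((n : ℝ)⁻¹ + exp (-(n : ℝ)))

noncomputable def spikeHeight (q x : ℝ) : ℝ := (x ^ 2)⁻¹ * exp (x / q)

lemma measurableSet_spikeInterval (n : ℕ) : MeasurableSet (spikeInterval n) := measurableSet_Icc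

lemma spikeHeight_nonneg (q x : ℝ) : 0 ≤ spikeHeight q x := by
  unfold spikeHeight; positivity

lemma exp_neg_le_inv_two_mul {x : ℝ} (hx : 0 < x) : exp (-x) ≤ (2 * x)⁻¹ := by
  rw [exp_neg]
  exact inv_anti₀ (by positivity) two_mul_le_exp

lemma spikeInterval_subset_Icc {n : ℕ} (hn : 2 ≤ n) :
    spikeInterval n ⊆ Icc (2 * (n : ℝ))⁻¹ 1 := by
  have hn' : (2 : ℝ) ≤ n := by exact_mod_cast hn
  have hexp := exp_neg_le_inv_two_mul (x := n) (by positivity)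
  have hhalf : (2 * (n : ℝ))⁻¹ = (n : ℝ)⁻¹ / 2 := by rw [mul_inv, mul_comm]; rfl
  have hinv : (n : ℝ)⁻¹ ≤ 2⁻¹ := inv_anti₀ (by norm_num) hn'
  rintro x ⟨hlo, hhi⟩
  constructor <;> linarith

lemma spikeInterval_subset_Ioc {n : ℕ} (hn : 2 ≤ n) : spikeInterval n ⊆ Ioc 0 1 := fun _ hx =>
  have hx' := spikeInterval_subset_Icc hn hx
  ⟨lt_of_lt_of_le (by positivity) hx'.1, hx'.2⟩

lemma measureReal_spikeInterval (n : ℕ) :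
    volume.real (spikeInterval n) = 2 * exp (-(n : ℝ)) := by
  rw [spikeInterval, volume_real_Icc_of_le (by linarith [exp_pos (-(n : ℝ))])]
  ring

lemma rpow_abs_le_rpow_of_mem_Icc {a x : ℝ} (ha : 0 < a) (hx : x ∈ Icc a 1) (r : ℝ) :
    a ^ |r| ≤ x ^ r := by
  rcases le_or_gt 0 r with hr | hr
  · rw [abs_of_nonneg hr]
    exact rpow_le_rpow ha.le hx.1 hr
  · calc a ^ |r| ≤ 1 := rpow_le_one ha.le (hx.1.trans hx.2) (abs_nonneg r)
      _ ≤ x ^ r := one_le_rpow_of_pos_of_le_one_of_nonpos (ha.trans_le hx.1) hx.2 hr.le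

lemma not_integrableOn_of_tendsto_setIntegral_atTop {α ι : Type*} [MeasurableSpace α]
    {μ : Measure α} {g : α → ℝ} {s : Set α} {t : ι → Set α} {l : Filter ι} [l.NeBot]
    (ht : ∀ᶠ i in l, t i ⊆ s) (hg : 0 ≤ᵐ[μ.restrict s] g)
    (htend : Tendsto (fun i => ∫ x in t i, g x ∂μ) l atTop) : ¬ IntegrableOn g s μ := by
  intro hint
  obtain ⟨i, hi, hlt⟩ := (ht.and (htend.eventually_gt_atTop (∫ x in s, g x ∂μ))).exists
  exact hlt.not_ge (setIntegral_mono_set hint hg hi.eventuallyLE)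

lemma integrable_of_eq_const_on_spikeInterval {h : ℝ → ℝ} {a : ℕ → ℝ}
    (h_on : ∀ n, 4 ≤ n → ∀ x ∈ spikeInterval n, h x = a n)
    (h_off : ∀ x, (∀ n, 4 ≤ n → x ∉ spikeInterval n) → h x = 0)
    (ha : Summable fun n : ℕ => exp (-(n : ℝ)) * |a n|) : Integrable h := by
  have h_on' : ∀ i : ℕ, EqOn h (fun _ => a (i + 4)) (spikeInterval (i + 4)) :=
    fun i => h_on (i + 4) (by omega)
  have hint : ∀ i : ℕ, IntegrableOn h (spikeInterval (i + 4)) := fun i =>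
    (integrableOn_const measure_Icc_lt_top.ne).congr_fun (h_on' i).symm
      (measurableSet_spikeInterval _)
  have hnorm : ∀ i : ℕ, ∫ x in spikeInterval (i + 4), ‖h x‖ =
      2 * (exp (-((i + 4 : ℕ) : ℝ)) * |a (i + 4)|) := fun i => by
    rw [setIntegral_congr_fun (measurableSet_spikeInterval _)
        (fun x hx => congrArg norm (h_on' i hx)),
      setIntegral_const, measureReal_spikeInterval, smul_eq_mul, Real.norm_eq_abs]
    ring
  refine (integrableOn_iUnion_of_summable_integral_norm hint ?_).integrable_of_forall_notMem_eq_zero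
    fun x hx => h_off x fun n hn hxn => hx (mem_iUnion.2 ⟨n - 4, by rwa [Nat.sub_add_cancel hn]⟩)
  simpa only [hnorm] using ((summable_nat_add_iff 4).2 ha).mul_left 2

lemma exp_neg_mul_spikeHeight_rpow_le {q q' : ℝ} (hq' : 1 ≤ q') (hq'q : q' ≤ q) (n : ℕ) :
    exp (-(n : ℝ)) * spikeHeight q n ^ q' ≤ ((n : ℝ) ^ 2)⁻¹ := by
  have hq : 0 < q := by linarith
  rw [spikeHeight, mul_rpow (by positivity) (exp_pos _).le, ← exp_mul, mul_left_comm,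
    ← exp_add]
  have hexp : exp (-(n : ℝ) + n / q * q') ≤ 1 := by
    rw [exp_le_one_iff, div_mul_eq_mul_div, neg_add_le_iff_le_add, add_zero, div_le_iff₀ hq]
    exact mul_le_mul_of_nonneg_left hq'q n.cast_nonneg
  have hpow : ((n : ℝ) ^ 2)⁻¹ ^ q' ≤ ((n : ℝ) ^ 2)⁻¹ :=
    rpow_le_self_of_le_one (by positivity) (by exact_mod_cast Nat.cast_inv_le_one (n ^ 2)) hq'
  calc ((n : ℝ) ^ 2)⁻¹ ^ q' * exp (-(n : ℝ) + n / q * q')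
      ≤ ((n : ℝ) ^ 2)⁻¹ ^ q' * 1 := by gcongr
    _ ≤ ((n : ℝ) ^ 2)⁻¹ := by rwa [mul_one]

lemma integrable_rpow_abs_of_spikes {q q' : ℝ} (hq' : 1 ≤ q') (hq'q : q' ≤ q) {f : ℝ → ℝ}
    (hf_on : ∀ n, 4 ≤ n → ∀ x ∈ spikeInterval n, f x = spikeHeight q n)
    (hf_off : ∀ x, (∀ n, 4 ≤ n → x ∉ spikeInterval n) → f x = 0) :
    Integrable fun x => |f x| ^ q' := by
  refine integrable_of_eq_const_on_spikeInterval (a := fun n => spikeHeight q n ^ q')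
    (fun n hn x hx => by rw [hf_on n hn x hx, abs_of_nonneg (spikeHeight_nonneg q n)])
    (fun x hx => by rw [hf_off x hx, abs_zero, zero_rpow (by linarith)]) ?_
  refine .of_nonneg_of_le (fun n => mul_nonneg (exp_pos _).le (abs_nonneg _)) (fun n => ?_)
    (summable_nat_pow_inv.2 one_lt_two)
  rw [abs_of_nonneg (rpow_nonneg (spikeHeight_nonneg q n) q')]
  exact exp_neg_mul_spikeHeight_rpow_le hq' hq'q n

lemma le_setIntegral_spikeInterval {g : ℝ → ℝ} {n : ℕ} (hn : 2 ≤ n) {c r : ℝ} (hc : 0 ≤ c)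
    (hg : ∀ x ∈ spikeInterval n, g x = x ^ r * c) :
    ((2 * (n : ℝ))⁻¹) ^ |r| * c * (2 * exp (-(n : ℝ))) ≤ ∫ x in spikeInterval n, g x := by
  have hpos : (0 : ℝ) < (2 * (n : ℝ))⁻¹ := by positivity
  have hint : IntegrableOn g (spikeInterval n) := by
    refine (ContinuousOn.integrableOn_compact isCompact_Icc ?_).congr_fun
      (fun x hx => (hg x hx).symm) (measurableSet_spikeInterval n)
    exact (continuousOn_id.rpow_const fun x hx =>
      Or.inl (hpos.trans_le (spikeInterval_subset_Icc hn hx).1).ne').mul continuousOn_const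
  rw [← measureReal_spikeInterval]
  refine setIntegral_ge_of_const_le_real (measurableSet_spikeInterval n)
    measure_Icc_lt_top.ne (fun x hx => ?_) hint
  rw [hg x hx]
  exact mul_le_mul_of_nonneg_right
    (rpow_abs_le_rpow_of_mem_Icc hpos (spikeInterval_subset_Icc hn hx) r) hc

lemma tendsto_spikeIntegral_lowerBound_atTop {q q' : ℝ} (hq : 0 < q) (hqq' : q < q') (r : ℝ) :
    Tendsto (fun n : ℕ => ((2 * (n : ℝ))⁻¹) ^ |r| * spikeHeight q n ^ q' * (2 * exp (-(n : ℝ))))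
      atTop atTop := by
  have hδ : 0 < q' / q - 1 := by rw [sub_pos, one_lt_div hq]; exact hqq'
  -- the bound equals `(2 / 2 ^ |r|) * e^{(q'/q - 1) n} / n ^ (|r| + 2 q')`
  have key := (tendsto_exp_mul_div_rpow_atTop (|r| + 2 * q') _ hδ).const_mul_atTop
    (by positivity : (0 : ℝ) < 2 / 2 ^ |r|)
  refine (key.comp tendsto_natCast_atTop_atTop).congr' ?_
  filter_upwards [eventually_gt_atTop 0] with n hn
  have hx : (0 : ℝ) < n := by exact_mod_cast hn
  simp only [Function.comp, spikeHeight]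
  rw [mul_rpow (by positivity) (exp_pos _).le, ← exp_mul, inv_rpow (by positivity),
    inv_rpow (by positivity), mul_rpow (by positivity) hx.le, ← rpow_natCast,
    ← rpow_mul hx.le, rpow_add hx, div_eq_mul_inv,
    show (q' / q - 1) * n = n / q * q' + -n by field_simp; ring, exp_add, Nat.cast_ofNat]
  ring

/-- For the net `f_ε = n^{−2} e^{n/q}` on the intervals
`[1/n − e^{−n}, 1/n + e^{−n}]` (`n ≥ 4`) and `0` elsewhere: for every
`q' ∈ [1, q]` there is `s` with `∫₀¹ ε^{q's} |f_ε|^{q'} dε/ε < ∞`, while for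
every `q' > q` and every `s` this integral is infinite. -/
theorem moderate_class_strict_inclusion_example
    (q : ℝ) (hq : 1 ≤ q)
    (f : ℝ → ℝ)
    (hf_on : ∀ n : ℕ, 4 ≤ n →
      ∀ ε ∈ Set.Icc ((n : ℝ)⁻¹ - Real.exp (-(n : ℝ))) ((n : ℝ)⁻¹ + Real.exp (-(n : ℝ))),
        f ε = ((n : ℝ) ^ 2)⁻¹ * Real.exp ((n : ℝ) / q))
    (hf_off : ∀ ε : ℝ,
      (∀ n : ℕ, 4 ≤ n →
        ε ∉ Set.Icc ((n : ℝ)⁻¹ - Real.exp (-(n : ℝ))) ((n : ℝ)⁻¹ + Real.exp (-(n : ℝ)))) →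
      f ε = 0) :
    (∀ q' : ℝ, 1 ≤ q' → q' ≤ q → ∃ s : ℝ,
      IntegrableOn (fun ε : ℝ => ε ^ (q' * s) * |f ε| ^ q' / ε) (Set.Ioc (0 : ℝ) 1)) ∧
    (∀ q' : ℝ, q < q' → ∀ s : ℝ,
      ¬ IntegrableOn (fun ε : ℝ => ε ^ (q' * s) * |f ε| ^ q' / ε) (Set.Ioc (0 : ℝ) 1)) := by
  refine ⟨fun q' hq' hq'q => ⟨1 / q', ?_⟩, fun q' hqq' s => ?_⟩
  · refine (integrable_rpow_abs_of_spikes hq' hq'q hf_on hf_off).integrableOn.congr_fun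
      (fun ε hε => ?_) measurableSet_Ioc
    rw [mul_one_div_cancel (by linarith), rpow_one, mul_div_cancel_left₀ _ hε.1.ne']
  · have hnonneg : 0 ≤ᵐ[volume.restrict (Ioc 0 1)] fun ε : ℝ => ε ^ (q' * s) * |f ε| ^ q' / ε :=
      (ae_restrict_iff' measurableSet_Ioc).2 (.of_forall fun ε hε => by have := hε.1; positivity)
    refine not_integrableOn_of_tendsto_setIntegral_atTop (t := spikeInterval)
      (eventually_atTop.2 ⟨2, fun n hn => spikeInterval_subset_Ioc hn⟩) hnonneg
      (tendsto_atTop_mono' atTop ?_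
        (tendsto_spikeIntegral_lowerBound_atTop (by linarith) hqq' (q' * s - 1)))
    filter_upwards [eventually_ge_atTop 4] with n hn
    refine le_setIntegral_spikeInterval (by omega) (rpow_nonneg (spikeHeight_nonneg q n) q')
      fun ε hε => ?_
    have hε0 : 0 < ε := (spikeInterval_subset_Ioc (by omega) hε).1
    have hfε : f ε = spikeHeight q n := hf_on n hn ε hε
    rw [hfε, abs_of_nonneg (spikeHeight_nonneg q n), rpow_sub_one hε0.ne']
    exact mul_div_right_comm _ _ _
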